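/- arXiv:0712.3836 — 3 statements merged into one kernel-verified Lean document; each statement's English description precedes it below -/
import Mathlib

section
/- In the braid group B_n (with Artin generators σ_1,…,σ_{n−1}), for 1 ≤ p < q ≤ n define a_{p,q} = σ_p σ_{p+1} ⋯ σ_{q−2} σ_{q−1} σ_{q−2}^{−1} ⋯ σ_p^{−1}. Then for all 1 ≤ p < q < r ≤ n, the relation a_{p,q} a_{q,r} = a_{q,r} a_{p,r} holds. -/
/-- Relations of the braid group `B_n` on generators `σ_1, …, σ_{n-1}`
(indexed by natural numbers; the generators of index `0` or `≥ n` are killed,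
so that the presented group is exactly `B_n`). -/
def braidRels (n : ℕ) : Set (FreeGroup ℕ) :=
  {r | (∃ i j : ℕ, 1 ≤ i ∧ i + 2 ≤ j ∧ j ≤ n - 1 ∧
          r = FreeGroup.of i * FreeGroup.of j * (FreeGroup.of i)⁻¹ * (FreeGroup.of j)⁻¹) ∨
       (∃ i : ℕ, 1 ≤ i ∧ i + 1 ≤ n - 1 ∧
          r = FreeGroup.of i * FreeGroup.of (i + 1) * FreeGroup.of i *
              (FreeGroup.of (i + 1) * FreeGroup.of i * FreeGroup.of (i + 1))⁻¹) ∨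
       (∃ i : ℕ, (i = 0 ∨ n ≤ i) ∧ r = FreeGroup.of i)}

/-- The braid group `B_n`. -/
def BraidGroup (n : ℕ) : Type := PresentedGroup (braidRels n)

instance (n : ℕ) : Group (BraidGroup n) := by unfold BraidGroup; infer_instance

/-- The Artin generator `σ_i` of `B_n` (nontrivial for `1 ≤ i ≤ n-1`). -/
def σ (n i : ℕ) : BraidGroup n := PresentedGroup.of i

/-- `δ_{p,q} = σ_p σ_{p+1} ⋯ σ_{q-1}` (equal to `1` when `q ≤ p`). -/
def δδ (n p q : ℕ) : BraidGroup n :=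
  ((List.range (q - p)).map (fun k => σ n (p + k))).prod

/-- The Birman–Ko–Lee generator
`a_{p,q} = σ_p ⋯ σ_{q-2} σ_{q-1} σ_{q-2}⁻¹ ⋯ σ_p⁻¹ = δ_{p,q-1} σ_{q-1} δ_{p,q-1}⁻¹`. -/
def a (n p q : ℕ) : BraidGroup n :=
  δδ n p (q - 1) * σ n (q - 1) * (δδ n p (q - 1))⁻¹

/-- A braid of `B_n` is `σ_i`-positive if it is represented by a word in the
letters `σ_j^{±1}` containing at least one `σ_i`, no `σ_i⁻¹`,
and no letter `σ_j^{±1}` with `j > i`. -/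
def SigmaPositive (n i : ℕ) (β : BraidGroup n) : Prop :=
  ∃ w : List (ℕ × Bool),
    ((w.map (fun l => if l.2 then σ n l.1 else (σ n l.1)⁻¹)).prod = β) ∧
    (i, true) ∈ w ∧ (i, false) ∉ w ∧ ∀ l ∈ w, l.1 ≤ i

/-!
Conjugating by `σ_r` moves the right endpoint: `a_{p,r+1} = σ_r⁻¹ a_{p,r} σ_r`, which is the
braid relation `σ_{r-1} σ_r σ_{r-1}⁻¹ = σ_r⁻¹ σ_{r-1} σ_r` conjugated by `σ_p ⋯ σ_{r-2}`.
For `r = q + 1` this is already the relation, since `a_{q,q+1} = σ_q`. Going from `r` to `r + 1`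
conjugates both sides by `σ_r`, which commutes with `a_{p,q}` because `q < r`.
-/

section BraidRelations

variable {n : ℕ}

lemma mk_eq_one_of_mem_braidRels {r : FreeGroup ℕ} (h : r ∈ braidRels n) :
    (PresentedGroup.mk (braidRels n) r : BraidGroup n) = 1 :=
  (QuotientGroup.eq_one_iff r).2 (Subgroup.subset_normalClosure h)

lemma σ_eq_one {i : ℕ} (h : i = 0 ∨ n ≤ i) : σ n i = 1 :=
  mk_eq_one_of_mem_braidRels (Or.inr (Or.inr ⟨i, h, rfl⟩))

lemma commute_σ_σ {i j : ℕ} (h : i + 2 ≤ j) : Commute (σ n i) (σ n j) := by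
  rcases Nat.eq_zero_or_pos i with rfl | hi
  · rw [σ_eq_one (Or.inl rfl)]; exact Commute.one_left _
  rcases le_or_gt n j with hj | hj
  · rw [σ_eq_one (n := n) (Or.inr hj)]; exact Commute.one_right _
  have hrel := mk_eq_one_of_mem_braidRels (n := n) (Or.inl ⟨i, j, hi, h, by omega, rfl⟩)
  simp only [map_mul, map_inv] at hrel
  exact mul_inv_eq_iff_eq_mul.mp (mul_inv_eq_one.mp hrel)

lemma σ_braid {i : ℕ} (hi : 1 ≤ i) (hin : i + 2 ≤ n) :
    σ n i * σ n (i + 1) * σ n i = σ n (i + 1) * σ n i * σ n (i + 1) := by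
  have hrel := mk_eq_one_of_mem_braidRels (n := n) (Or.inr (Or.inl ⟨i, hi, by omega, rfl⟩))
  simp only [map_mul, map_inv] at hrel
  exact mul_inv_eq_one.mp hrel

lemma δδ_succ {p m : ℕ} (h : p ≤ m) : δδ n p (m + 1) = δδ n p m * σ n m := by
  rw [δδ, δδ, show m + 1 - p = m - p + 1 by omega, List.range_succ, List.map_append,
    List.prod_append, List.map_singleton, List.prod_singleton, Nat.add_sub_cancel' h]

lemma commute_σ_δδ {j p m : ℕ} (h : m < j) : Commute (σ n j) (δδ n p m) := by
  refine Commute.list_prod_right _ _ fun x hx => ?_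
  obtain ⟨k, hk, rfl⟩ := List.mem_map.mp hx
  exact (commute_σ_σ (by simp at hk; omega)).symm

lemma commute_σ_a {j p q : ℕ} (hq : 0 < q) (h : q < j) : Commute (σ n j) (a n p q) := by
  have hδ : Commute (σ n j) (δδ n p (q - 1)) := commute_σ_δδ (by omega)
  exact (hδ.mul_right (commute_σ_σ (by omega)).symm).mul_right hδ.inv_right

lemma a_self_succ (q : ℕ) : a n q (q + 1) = σ n q := by
  simp [a, δδ]

lemma a_succ_right {p q : ℕ} (hp : 1 ≤ p) (hpq : p < q) (hqn : q < n) :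
    a n p (q + 1) = (σ n q)⁻¹ * a n p q * σ n q := by
  obtain ⟨m, rfl⟩ : ∃ m, q = m + 1 := ⟨q - 1, by omega⟩
  set d := δδ n p m
  set x := σ n m
  set y := σ n (m + 1)
  have hbraid : x * y * x⁻¹ = y⁻¹ * x * y := by
    have := σ_braid (n := n) (i := m) (by omega) (by omega)
    rw [mul_inv_eq_iff_eq_mul, mul_assoc, mul_assoc, eq_inv_mul_iff_mul_eq, ← mul_assoc,
      ← mul_assoc]
    exact this.symm
  have hdy : Commute y d := commute_σ_δδ (by omega)
  have ha : a n p (m + 1) = d * x * d⁻¹ := by simp [a, d, x]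
  calc a n p (m + 1 + 1) = d * (x * y * x⁻¹) * d⁻¹ := by
        simp only [a, Nat.add_sub_cancel, δδ_succ (by omega : p ≤ m), mul_inv_rev, mul_assoc]
        rfl
    _ = d * y⁻¹ * x * (y * d⁻¹) := by rw [hbraid]; group
    _ = y⁻¹ * d * x * (d⁻¹ * y) := by rw [hdy.inv_left.eq, hdy.inv_right.eq]
    _ = y⁻¹ * a n p (m + 1) * y := by rw [ha]; group

end BraidRelations

theorem stmt0 (n p q r : ℕ) (hp : 1 ≤ p) (hpq : p < q) (hqr : q < r) (hrn : r ≤ n) :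
    a n p q * a n q r = a n q r * a n p r := by
  induction r, hqr using Nat.le_induction with
  | base =>
    rw [a_self_succ, a_succ_right hp hpq (by omega)]
    group
  | succ r hqr ih =>
    have hσ : Commute (σ n r) (a n p q) := commute_σ_a (by omega) (by omega)
    rw [a_succ_right (by omega) hqr (by omega), a_succ_right hp (by omega) (by omega)]
    calc a n p q * ((σ n r)⁻¹ * a n q r * σ n r)
        = (σ n r)⁻¹ * (a n p q * a n q r) * σ n r := by
          simp only [← mul_assoc, ← hσ.inv_left.eq]
      _ = (σ n r)⁻¹ * (a n q r * a n p r) * σ n r := by rw [ih (by omega)]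
      _ = (σ n r)⁻¹ * a n q r * σ n r * ((σ n r)⁻¹ * a n p r * σ n r) := by group
end

section
/- If (A, ≺) is a well-order of ordinal type λ ≥ 2, then the ShortLex order on finite sequences over A is a well-order of ordinal type λ^ω (ordinal exponentiation). -/
/-!
Lists of length `n` under the lexicographic order form a well-order of type `λ ^ n`: splitting off
the head identifies them with the lexicographic product of `A` and the lists of length `n - 1`.
These orders embed into ShortLex, so `λ ^ ω ≤ type`. Conversely, the rank
`λ ^ |l| + (position of l among the lists of its length)` is strictly monotone for ShortLex and
stays below `λ ^ ω`, because `λ ^ n + λ ^ n = λ ^ n * 2 ≤ λ ^ (n + 1)` once `λ ≥ 2`.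
-/

open Ordinal List

theorem Ordinal.type_le_of_strictMono {α : Type*} {r : α → α → Prop} [IsWellOrder α r]
    {o : Ordinal} (f : α → Ordinal) (hf : ∀ a b, r a b → f a < f b) (ho : ∀ a, f a < o) :
    type r ≤ o :=
  type_toType o ▸ (RelEmbedding.ofMonotone (fun a => ToType.mk ⟨f a, ho a⟩)
    fun a b h => ToType.mk.lt_iff_lt.2 (hf a b h)).ordinal_type_le

namespace List.Shortlex

variable {α : Type*} (r : α → α → Prop)

def consRelIso (n : ℕ) :
    Prod.Lex r (Subrel (Shortlex r) (fun l => l.length = n)) ≃r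
      Subrel (Shortlex r) (fun l => l.length = n + 1) where
  toFun p := ⟨p.1 :: p.2.1, by simp [p.2.2]⟩
  invFun l := (l.1.head (ne_nil_of_length_eq_add_one l.2), ⟨l.1.tail, by simp [l.2]⟩)
  left_inv _ := rfl
  right_inv l := Subtype.ext (cons_head_tail _)
  map_rel_iff' {p q} := by
    obtain ⟨a, l₁, h₁⟩ := p
    obtain ⟨b, l₂, h₂⟩ := q
    change Shortlex r (a :: l₁) (b :: l₂) ↔
      Prod.Lex r (Subrel (Shortlex r) (fun l => l.length = n)) (a, ⟨l₁, h₁⟩) (b, ⟨l₂, h₂⟩)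
    rw [Prod.lex_def, shortlex_iff_lex (by simp [h₁, h₂]), cons_lex_cons_iff]
    exact or_congr_right (and_congr_right fun _ => (shortlex_iff_lex (h₁.trans h₂.symm)).symm)

variable [IsWellOrder α r]

instance isWellOrder : IsWellOrder (List α) (Shortlex r) where
  wf := wf IsWellFounded.wf

theorem type_subrel_length_eq (n : ℕ) :
    type (Subrel (Shortlex r) (fun l => l.length = n)) = type r ^ n := by
  induction n with
  | zero =>
    have : Subsingleton {l : List α // l.length = 0} :=
      ⟨fun ⟨_, h₁⟩ ⟨_, h₂⟩ =>
        Subtype.ext ((eq_nil_of_length_eq_zero h₁).trans (eq_nil_of_length_eq_zero h₂).symm)⟩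
    have : Nonempty {l : List α // l.length = 0} := ⟨⟨[], rfl⟩⟩
    rw [pow_zero]
    exact type_eq_one_of_unique _
  | succ n ih =>
    rw [← (consRelIso r n).ordinalType_congr, type_prod_lex, ih, pow_succ]

noncomputable def rank (l : List α) : Ordinal :=
  type r ^ l.length + typein (Subrel (Shortlex r) (fun l' => l'.length = l.length)) ⟨l, rfl⟩

theorem rank_eq {l : List α} {n : ℕ} (h : l.length = n) :
    rank r l = type r ^ n + typein (Subrel (Shortlex r) (fun l' => l'.length = n)) ⟨l, h⟩ := by
  subst h; rfl

variable {r}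

theorem rank_lt_opow_succ (hr : 2 ≤ type r) (l : List α) :
    rank r l < type r ^ (l.length + 1) :=
  calc rank r l < type r ^ l.length + type r ^ l.length :=
        add_lt_add_right ((typein_lt_type _ _).trans_eq (type_subrel_length_eq r _)) _
    _ = type r ^ l.length * 2 := (Ordinal.mul_two _).symm
    _ ≤ type r ^ l.length * type r := mul_le_mul_right hr _
    _ = type r ^ (l.length + 1) := (pow_succ _ _).symm

theorem rank_lt_rank (hr : 2 ≤ type r) {s t : List α} (h : Shortlex r s t) :
    rank r s < rank r t := by
  rcases shortlex_def.1 h with hlen | ⟨hlen, -⟩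
  · calc rank r s < type r ^ (s.length + 1) := rank_lt_opow_succ hr s
      _ ≤ type r ^ t.length := pow_le_pow_right' (one_le_two.trans hr) hlen
      _ ≤ rank r t := le_self_add
  · rw [rank_eq r hlen, rank_eq r rfl]
    exact add_lt_add_right ((typein_lt_typein (Subrel (Shortlex r) fun l => l.length = t.length)
      (a := ⟨s, hlen⟩) (b := ⟨t, rfl⟩)).2 h) _

theorem rank_lt_opow_omega0 (hr : 2 ≤ type r) (l : List α) : rank r l < type r ^ ω :=
  calc rank r l < type r ^ (l.length + 1) := rank_lt_opow_succ hr l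
    _ = type r ^ ((l.length + 1 : ℕ) : Ordinal) := (opow_natCast _ _).symm
    _ ≤ type r ^ ω := opow_le_opow_right (zero_lt_two.trans_le hr) (natCast_lt_omega0 _).le

theorem type_eq_opow_omega0 (hr : 2 ≤ type r) : type (Shortlex r) = type r ^ ω := by
  refine le_antisymm (type_le_of_strictMono (rank r) (fun _ _ => rank_lt_rank hr)
    (rank_lt_opow_omega0 hr)) ?_
  rw [opow_le_of_isSuccLimit (zero_lt_two.trans_le hr).ne' isSuccLimit_omega0]
  intro b hb
  obtain ⟨n, rfl⟩ := lt_omega0.1 hb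
  rw [opow_natCast, ← type_subrel_length_eq r]
  exact (Subrel.relEmbedding _ _).ordinal_type_le

end List.Shortlex

theorem stmt16 {A : Type*} [LinearOrder A] [IsWellOrder A (· < ·)]
    (hl : 2 ≤ Ordinal.type ((· < ·) : A → A → Prop)) :
    ∃ h : IsWellOrder (List A)
        (fun s t => s.length < t.length ∨
          (s.length = t.length ∧ List.Lex (· < ·) s t)),
      @Ordinal.type (List A)
          (fun s t => s.length < t.length ∨
            (s.length = t.length ∧ List.Lex (· < ·) s t)) h =
        Ordinal.type ((· < ·) : A → A → Prop) ^ (Ordinal.omega0 : Ordinal) := by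
  have hshortlex : (fun s t : List A => s.length < t.length ∨
      (s.length = t.length ∧ List.Lex (· < ·) s t)) = Shortlex (· < ·) := by
    ext s t
    exact shortlex_def.symm
  rw [hshortlex]
  exact ⟨inferInstance, Shortlex.type_eq_opow_omega0 hl⟩
end

section
/- In the braid group B_n, for 1 ≤ p < q < n, the element a_{p,q}^{−1} a_{r,q+k} for any r < q+k ≤ n with q < q+k is σ_{q+k−1}-positive; in particular, for p < q < s ≤ n and any r < s, the braid a_{p,q}^{−1} a_{r,s} can be written as a word containing σ_{s−1}, no σ_{s−1}^{−1}, and no generator σ_j^{±1} with j ≥ s. -/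
/-!
Writing out the definitions, `a_{p,q}⁻¹ a_{r,s}` is the word
`δ_{p,q-1} σ_{q-1}⁻¹ δ_{p,q-1}⁻¹ · δ_{r,s-1} σ_{s-1} δ_{r,s-1}⁻¹`, where `δ_{p,m}` only involves
`σ_j` with `j < m`. Since `0 < q < s`, its letter of largest index is the single `σ_{s-1}`.
-/

theorem FreeGroup.mem_invRev_iff {α : Type*} {w : List (α × Bool)} {l : α × Bool} :
    l ∈ FreeGroup.invRev w ↔ (l.1, !l.2) ∈ w := by
  obtain ⟨x, b⟩ := l
  simp [FreeGroup.invRev]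

open FreeGroup (invRev mem_invRev_iff)

namespace BraidGroup

def mk (n : ℕ) : FreeGroup ℕ →* BraidGroup n := PresentedGroup.mk (braidRels n)

theorem mk_eq_lift (n : ℕ) : mk n = FreeGroup.lift (σ n) :=
  FreeGroup.ext_hom _ _ fun _ => rfl

theorem prod_map_sigma_eq_mk (n : ℕ) (w : List (ℕ × Bool)) :
    (w.map fun l => if l.2 then σ n l.1 else (σ n l.1)⁻¹).prod = mk n (FreeGroup.mk w) := by
  simp only [mk_eq_lift, FreeGroup.lift_mk, cond_eq_ite]

theorem sigmaPositive_of_mk {n i : ℕ} {β : BraidGroup n} (w : List (ℕ × Bool))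
    (hw : mk n (FreeGroup.mk w) = β) (hpos : (i, true) ∈ w) (hneg : (i, false) ∉ w)
    (hle : ∀ l ∈ w, l.1 ≤ i) : SigmaPositive n i β :=
  ⟨w, by rw [prod_map_sigma_eq_mk, hw], hpos, hneg, hle⟩

def deltaWord (p q : ℕ) : List (ℕ × Bool) := (List.range' p (q - p)).map (·, true)

theorem lt_of_mem_deltaWord {p q : ℕ} {l : ℕ × Bool} (h : l ∈ deltaWord p q) : l.1 < q := by
  obtain ⟨m, hm, rfl⟩ := List.mem_map.1 h
  have := List.mem_range'_1.1 hm
  omega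

theorem mk_deltaWord (n p q : ℕ) : mk n (FreeGroup.mk (deltaWord p q)) = δδ n p q := by
  simp only [← prod_map_sigma_eq_mk, deltaWord, δδ, List.map_map, List.range'_eq_map_range]
  rfl

def bklWord (p q : ℕ) : List (ℕ × Bool) :=
  deltaWord p (q - 1) ++ [(q - 1, true)] ++ invRev (deltaWord p (q - 1))

theorem mk_bklWord (n p q : ℕ) : mk n (FreeGroup.mk (bklWord p q)) = a n p q := by
  rw [bklWord, ← FreeGroup.mul_mk, ← FreeGroup.mul_mk, ← FreeGroup.inv_mk, map_mul, map_mul,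
    map_inv, mk_deltaWord, a]
  rfl

theorem mem_bklWord {p q : ℕ} {l : ℕ × Bool} (h : l ∈ bklWord p q) :
    l.1 < q - 1 ∨ l.1 = q - 1 ∧ l.2 = true := by
  simp only [bklWord, List.mem_append, List.mem_singleton, mem_invRev_iff] at h
  rcases h with (h | rfl) | h
  · exact .inl (lt_of_mem_deltaWord h)
  · exact .inr ⟨rfl, rfl⟩
  · exact .inl (lt_of_mem_deltaWord (l := (l.1, !l.2)) h)

theorem mem_invRev_bklWord {p q : ℕ} {l : ℕ × Bool} (h : l ∈ invRev (bklWord p q)) :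
    l.1 < q - 1 ∨ l.1 = q - 1 ∧ l.2 = false := by
  simpa using mem_bklWord (mem_invRev_iff.1 h)

end BraidGroup

open BraidGroup

theorem stmt17_general (n p q r s : ℕ) (hpq : p < q) (hqs : q < s) :
    SigmaPositive n (s - 1) ((a n p q)⁻¹ * a n r s) := by
  refine sigmaPositive_of_mk (invRev (bklWord p q) ++ bklWord r s) ?_ ?_ ?_ ?_
  · rw [← FreeGroup.mul_mk, ← FreeGroup.inv_mk, map_mul, map_inv, mk_bklWord, mk_bklWord]
  · simp [bklWord]
  · rw [List.mem_append]
    rintro (h | h)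
    · have := mem_invRev_bklWord h
      omega
    · simpa using mem_bklWord h
  · intro l hl
    rcases List.mem_append.1 hl with h | h
    · have := mem_invRev_bklWord h
      omega
    · have := mem_bklWord h
      omega

theorem stmt17 (n p q r s : ℕ) (hp : 1 ≤ p) (hpq : p < q) (hqs : q < s) (hsn : s ≤ n)
    (hr : 1 ≤ r) (hrs : r < s) :
    SigmaPositive n (s - 1) ((a n p q)⁻¹ * a n r s) :=
  stmt17_general n p q r s hpq hqs
end
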